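/- arXiv:1909.01327 — 2 statements merged into one kernel-verified Lean document; each statement's English description precedes it below -/
import Mathlib

section
/- Let T ≥ 1, let μ : Fin T → ℝ satisfy μ_t > 0 for all t, and let y : Fin T → ℝ satisfy y_t ≥ 0 for all t and Σ_t y_t > 0. Then sup over η ∈ ℝ of Σ_t ( y_t·(log μ_t + η) − μ_t·exp(η) ) equals Σ_t y_t·log( μ_t / Σ_s μ_s ) + (Σ_t y_t)·log(Σ_t y_t) − Σ_t y_t. In particular, the profiled value differs from the multinomial log-likelihood Σ_t y_t·log( μ_t / Σ_s μ_s ) only by a quantity depending on y alone. -/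
open Real Finset

/-- Profiling out the pair fixed effect in three-way FE-PPML: the supremum over `η` of
the Poisson pseudo-log-likelihood equals the multinomial log-likelihood
`∑ t, y t * log (μ t / ∑ s, μ s)` plus a term depending only on `y`. -/
theorem stmt1 (T : ℕ) (hT : 1 ≤ T) (μ y : Fin T → ℝ)
    (hμ : ∀ t, 0 < μ t) (hy : ∀ t, 0 ≤ y t) (hsum : 0 < ∑ t, y t) :
    (⨆ η : ℝ, ∑ t, (y t * (Real.log (μ t) + η) - μ t * Real.exp η)) =
      (∑ t, y t * Real.log (μ t / ∑ s, μ s))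
        + (∑ t, y t) * Real.log (∑ t, y t) - (∑ t, y t) := by
  have hTne : (Finset.univ : Finset (Fin T)).Nonempty := by
    simpa [Finset.univ_nonempty_iff] using Fin.pos_iff_nonempty.mp (by omega)
  set Y : ℝ := ∑ t, y t with hY
  set M : ℝ := ∑ t, μ t with hM
  have hMpos : 0 < M := Finset.sum_pos (fun t _ => hμ t) hTne
  set A : ℝ := ∑ t, y t * Real.log (μ t) with hA
  -- rewrite the summand
  have hf : ∀ η : ℝ, (∑ t, (y t * (Real.log (μ t) + η) - μ t * Real.exp η))
      = A + Y * η - M * Real.exp η := by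
    intro η
    rw [Finset.sum_sub_distrib]
    simp [mul_add, Finset.sum_add_distrib, ← Finset.sum_mul, hA, hY, hM]
  set η₀ : ℝ := Real.log (Y / M) with hη₀
  have hexp : Real.exp η₀ = Y / M := Real.exp_log (div_pos hsum hMpos)
  have hMe : M * Real.exp η₀ = Y := by
    rw [hexp]; field_simp
  -- each value is ≤ value at η₀
  have hle : ∀ η : ℝ, A + Y * η - M * Real.exp η ≤ A + Y * η₀ - M * Real.exp η₀ := by
    intro η
    have h1 : (η - η₀) + 1 ≤ Real.exp (η - η₀) := Real.add_one_le_exp _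
    have h2 : Y * ((η - η₀) + 1) ≤ Y * Real.exp (η - η₀) :=
      mul_le_mul_of_nonneg_left h1 hsum.le
    have h3 : Real.exp η = Real.exp (η - η₀) * Real.exp η₀ := by
      rw [← Real.exp_add]; ring_nf
    have h4 : M * Real.exp η = Y * Real.exp (η - η₀) := by
      rw [h3, ← mul_assoc, mul_comm M, mul_assoc, hMe, mul_comm]
    nlinarith [h2, h4, hMe]
  have hsup : (⨆ η : ℝ, ∑ t, (y t * (Real.log (μ t) + η) - μ t * Real.exp η))
      = A + Y * η₀ - M * Real.exp η₀ := by
    apply le_antisymm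
    · exact ciSup_le fun η => by rw [hf η]; exact hle η
    · have := le_ciSup (f := fun η => ∑ t, (y t * (Real.log (μ t) + η) - μ t * Real.exp η))
        (by
          refine ⟨A + Y * η₀ - M * Real.exp η₀, ?_⟩
          rintro x ⟨η, rfl⟩
          dsimp only
          rw [hf η]; exact hle η) η₀
      rwa [hf η₀] at this
  rw [hsup, hMe, hη₀, Real.log_div (ne_of_gt hsum) (ne_of_gt hMpos)]
  have hrhs : (∑ t, y t * Real.log (μ t / M)) = A - Y * Real.log M := by
    rw [hA, hY, Finset.sum_mul, ← Finset.sum_sub_distrib]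
    refine Finset.sum_congr rfl fun t _ => ?_
    rw [Real.log_div (ne_of_gt (hμ t)) (ne_of_gt hMpos)]
    ring
  rw [hrhs]
  ring
end

section
/- Let N > 2 and let Q_N be the 2N × 2N real block matrix with diagonal blocks (N−1)·I_N and off-diagonal blocks ιιᵀ − I_N, where ι ∈ ℝ^N is the all-ones vector. Then: (i) for every v ∈ ℝ^N with ιᵀv = 0, the vector (v; v) satisfies Q_N·(v; v) = (N−2)·(v; v) and the vector (v; −v) satisfies Q_N·(v; −v) = N·(v; −v); (ii) Q_N·(ι; ι) = 2(N−1)·(ι; ι); and (iii) Q_N·(ι; −ι) = 0. Consequently Q_N has eigenvalue 0 with multiplicity one, eigenvalue N−2 with multiplicity N−1, eigenvalue N with multiplicity N−1, and eigenvalue 2(N−1) with multiplicity one. -/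
open Real Finset Matrix Module

private lemma keyQ (N : ℕ) (v w : Fin N → ℝ) :
    (Matrix.fromBlocks
        (((N : ℝ) - 1) • (1 : Matrix (Fin N) (Fin N) ℝ))
        (Matrix.vecMulVec (fun _ => (1 : ℝ)) (fun _ => (1 : ℝ)) - 1)
        (Matrix.vecMulVec (fun _ => (1 : ℝ)) (fun _ => (1 : ℝ)) - 1)
        (((N : ℝ) - 1) • (1 : Matrix (Fin N) (Fin N) ℝ))).mulVec (Sum.elim v w)
    = Sum.elim (fun i => ((N:ℝ)-1) * v i + ((∑ j, w j) - w i))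
        (fun i => ((∑ j, v j) - v i) + ((N:ℝ)-1) * w i) := by
  rw [Matrix.fromBlocks_mulVec]
  funext i; cases i <;>
    simp [Matrix.sub_mulVec, Matrix.mulVec, dotProduct, Matrix.vecMulVec_apply,
      Matrix.smul_mulVec, Matrix.one_mulVec]

/-- sum functional -/
private def sumF (N : ℕ) : (Fin N → ℝ) →ₗ[ℝ] ℝ where
  toFun v := ∑ i, v i
  map_add' v w := by simp [Finset.sum_add_distrib]
  map_smul' c v := by simp [Finset.mul_sum]

/-- v ↦ (v ; v) -/
private def Jp (N : ℕ) : (Fin N → ℝ) →ₗ[ℝ] ((Fin N ⊕ Fin N) → ℝ) where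
  toFun v := Sum.elim v v
  map_add' v w := by funext i; cases i <;> simp
  map_smul' c v := by funext i; cases i <;> simp

/-- v ↦ (v ; -v) -/
private def Jm (N : ℕ) : (Fin N → ℝ) →ₗ[ℝ] ((Fin N ⊕ Fin N) → ℝ) where
  toFun v := Sum.elim v (-v)
  map_add' v w := by funext i; cases i <;> simp [add_comm]
  map_smul' c v := by funext i; cases i <;> simp

/-- Spectral decomposition of `Q_N = [[(N-1)I, ιιᵀ - I], [ιιᵀ - I, (N-1)I]]` for `N > 2`:
vectors `(v ; v)` with `ιᵀ v = 0` are eigenvectors with eigenvalue `N - 2`, vectors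
`(v ; -v)` with `ιᵀ v = 0` are eigenvectors with eigenvalue `N`, `(ι ; ι)` is an
eigenvector with eigenvalue `2(N-1)`, and `(ι ; -ι)` is a zero-eigenvector; the
corresponding eigenvalue multiplicities (eigenspace dimensions) are `1`, `N - 1`,
`N - 1`, and `1`. -/
theorem stmt13 (N : ℕ) (hN : 2 < N) :
    let Q : Matrix (Fin N ⊕ Fin N) (Fin N ⊕ Fin N) ℝ :=
      Matrix.fromBlocks
        (((N : ℝ) - 1) • (1 : Matrix (Fin N) (Fin N) ℝ))
        (Matrix.vecMulVec (fun _ => (1 : ℝ)) (fun _ => (1 : ℝ)) - 1)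
        (Matrix.vecMulVec (fun _ => (1 : ℝ)) (fun _ => (1 : ℝ)) - 1)
        (((N : ℝ) - 1) • (1 : Matrix (Fin N) (Fin N) ℝ))
    (∀ v : Fin N → ℝ, (∑ i, v i) = 0 →
        Q.mulVec (Sum.elim v v) = ((N : ℝ) - 2) • Sum.elim v v ∧
        Q.mulVec (Sum.elim v (-v)) = (N : ℝ) • Sum.elim v (-v)) ∧
    Q.mulVec (Sum.elim (fun _ => (1 : ℝ)) (fun _ => (1 : ℝ)))
      = (2 * ((N : ℝ) - 1)) • Sum.elim (fun _ => (1 : ℝ)) (fun _ => (1 : ℝ)) ∧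
    Q.mulVec (Sum.elim (fun _ => (1 : ℝ)) (fun _ => (-1 : ℝ))) = 0 ∧
    finrank ℝ (Module.End.eigenspace Q.mulVecLin (0 : ℝ)) = 1 ∧
    finrank ℝ (Module.End.eigenspace Q.mulVecLin ((N : ℝ) - 2)) = N - 1 ∧
    finrank ℝ (Module.End.eigenspace Q.mulVecLin (N : ℝ)) = N - 1 ∧
    finrank ℝ (Module.End.eigenspace Q.mulVecLin (2 * ((N : ℝ) - 1))) = 1 := by
  intro Q
  -- eigenvector identities
  have hpart1 : ∀ v : Fin N → ℝ, (∑ i, v i) = 0 →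
      Q.mulVec (Sum.elim v v) = ((N : ℝ) - 2) • Sum.elim v v ∧
      Q.mulVec (Sum.elim v (-v)) = (N : ℝ) • Sum.elim v (-v) := by
    intro v hv
    constructor
    · rw [show Q = Q from rfl, keyQ, hv]
      funext i; cases i <;> simp <;> ring
    · rw [show Q = Q from rfl, keyQ]
      have : ∑ j, (-v) j = 0 := by simpa using hv
      rw [this, hv]
      funext i; cases i <;> simp <;> ring
  have hones : Q.mulVec (Sum.elim (fun _ => (1 : ℝ)) (fun _ => (1 : ℝ)))
      = (2 * ((N : ℝ) - 1)) • Sum.elim (fun _ => (1 : ℝ)) (fun _ => (1 : ℝ)) := by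
    rw [show Q = Q from rfl, keyQ]
    funext i; cases i <;> simp <;> ring
  have hzero : Q.mulVec (Sum.elim (fun _ => (1 : ℝ)) (fun _ => (-1 : ℝ))) = 0 := by
    rw [show Q = Q from rfl, keyQ]
    funext i; cases i <;> simp
  refine ⟨hpart1, hones, hzero, ?_⟩
  -- now eigenspace dimensions
  set E : ℝ → Submodule ℝ ((Fin N ⊕ Fin N) → ℝ) := Module.End.eigenspace Q.mulVecLin with hE
  have hNR : (3 : ℝ) ≤ (N : ℝ) := by exact_mod_cast hN
  -- lower bounds
  have hd0 : 1 ≤ finrank ℝ (E 0) := by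
    have hmem : (Sum.elim (fun _ => (1:ℝ)) (fun _ => (-1:ℝ))) ∈ E 0 := by
      rw [hE, Module.End.mem_eigenspace_iff, Matrix.mulVecLin_apply, hzero, zero_smul]
    have hne : (Sum.elim (fun _ => (1:ℝ)) (fun _ => (-1:ℝ)) : (Fin N ⊕ Fin N) → ℝ) ≠ 0 := by
      intro h
      have := congrFun h (Sum.inl ⟨0, by omega⟩)
      simpa using this
    calc 1 = finrank ℝ (ℝ ∙ (Sum.elim (fun _ => (1:ℝ)) (fun _ => (-1:ℝ)))) :=
            (finrank_span_singleton hne).symm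
      _ ≤ finrank ℝ (E 0) := Submodule.finrank_mono
            ((Submodule.span_singleton_le_iff_mem _ _).2 hmem)
  have hd3 : 1 ≤ finrank ℝ (E (2 * ((N:ℝ) - 1))) := by
    have hmem : (Sum.elim (fun _ => (1:ℝ)) (fun _ => (1:ℝ))) ∈ E (2 * ((N:ℝ)-1)) := by
      rw [hE, Module.End.mem_eigenspace_iff, Matrix.mulVecLin_apply, hones]
    have hne : (Sum.elim (fun _ => (1:ℝ)) (fun _ => (1:ℝ)) : (Fin N ⊕ Fin N) → ℝ) ≠ 0 := by
      intro h
      have := congrFun h (Sum.inl ⟨0, by omega⟩)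
      simpa using this
    calc 1 = finrank ℝ (ℝ ∙ (Sum.elim (fun _ => (1:ℝ)) (fun _ => (1:ℝ)))) :=
            (finrank_span_singleton hne).symm
      _ ≤ finrank ℝ (E _) := Submodule.finrank_mono
            ((Submodule.span_singleton_le_iff_mem _ _).2 hmem)
  have hKerRank : finrank ℝ (LinearMap.ker (sumF N)) = N - 1 := by
    have hsurj : LinearMap.range (sumF N) = ⊤ := by
      rw [LinearMap.range_eq_top]
      intro x
      refine ⟨fun _ => x / N, ?_⟩
      have hNne : (N : ℝ) ≠ 0 := by positivity
      simp [sumF, Finset.sum_const, hNne]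
      field_simp
    have := LinearMap.finrank_range_add_finrank_ker (sumF N)
    rw [hsurj] at this
    simp only [finrank_top, Module.finrank_self, Module.finrank_pi, Fintype.card_fin] at this
    omega
  have hJp_inj : Function.Injective (Jp N) := by
    intro v w h
    funext i
    exact congrFun h (Sum.inl i)
  have hJm_inj : Function.Injective (Jm N) := by
    intro v w h
    funext i
    exact congrFun h (Sum.inl i)
  have hd1 : N - 1 ≤ finrank ℝ (E ((N:ℝ) - 2)) := by
    have hle : (LinearMap.ker (sumF N)).map (Jp N) ≤ E ((N:ℝ) - 2) := by
      rintro x ⟨v, hv, rfl⟩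
      rw [hE, Module.End.mem_eigenspace_iff, Matrix.mulVecLin_apply]
      exact (hpart1 v hv).1
    have heq : finrank ℝ ((LinearMap.ker (sumF N)).map (Jp N)) = N - 1 := by
      rw [← hKerRank]
      exact (Submodule.equivMapOfInjective (Jp N) hJp_inj _).finrank_eq.symm
    rw [← heq]
    exact Submodule.finrank_mono hle
  have hd2 : N - 1 ≤ finrank ℝ (E (N:ℝ)) := by
    have hle : (LinearMap.ker (sumF N)).map (Jm N) ≤ E (N:ℝ) := by
      rintro x ⟨v, hv, rfl⟩
      rw [hE, Module.End.mem_eigenspace_iff, Matrix.mulVecLin_apply]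
      exact (hpart1 v hv).2
    have heq : finrank ℝ ((LinearMap.ker (sumF N)).map (Jm N)) = N - 1 := by
      rw [← hKerRank]
      exact (Submodule.equivMapOfInjective (Jm N) hJm_inj _).finrank_eq.symm
    rw [← heq]
    exact Submodule.finrank_mono hle
  -- distinctness of eigenvalues
  have hne01 : (0:ℝ) ≠ (N:ℝ) - 2 := by nlinarith
  have hne02 : (0:ℝ) ≠ (N:ℝ) := by nlinarith
  have hne03 : (0:ℝ) ≠ 2 * ((N:ℝ) - 1) := by nlinarith
  have hne12 : (N:ℝ) - 2 ≠ (N:ℝ) := by nlinarith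
  have hne13 : (N:ℝ) - 2 ≠ 2 * ((N:ℝ) - 1) := by nlinarith
  have hne23 : (N:ℝ) ≠ 2 * ((N:ℝ) - 1) := by nlinarith
  -- independence and upper bound
  have hInd : iSupIndep E := Module.End.eigenspaces_iSupIndep Q.mulVecLin
  have hdisj01 : Disjoint (E 0) (E ((N:ℝ)-2)) :=
    hInd.pairwiseDisjoint hne01
  have hdisj2 : Disjoint (E (N:ℝ)) (E 0 ⊔ E ((N:ℝ)-2)) := by
    have := hInd.disjoint_biSup (y := {(0:ℝ), (N:ℝ)-2}) (x := (N:ℝ))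
      (by simp [hne02.symm, hne12.symm])
    exact this.mono_right (sup_le (le_biSup _ (by simp)) (le_biSup _ (by simp)))
  have hdisj3 : Disjoint (E (2*((N:ℝ)-1))) (E 0 ⊔ E ((N:ℝ)-2) ⊔ E (N:ℝ)) := by
    have := hInd.disjoint_biSup (y := {(0:ℝ), (N:ℝ)-2, (N:ℝ)}) (x := 2*((N:ℝ)-1))
      (by simp [hne03.symm, hne13.symm, hne23.symm])
    exact this.mono_right (sup_le (sup_le (le_biSup _ (by simp)) (le_biSup _ (by simp)))
      (le_biSup _ (by simp)))
  have hsum01 : finrank ℝ ↥(E 0 ⊔ E ((N:ℝ)-2)) = finrank ℝ (E 0) + finrank ℝ (E ((N:ℝ)-2)) := by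
    have := Submodule.finrank_sup_add_finrank_inf_eq (E 0) (E ((N:ℝ)-2))
    rw [hdisj01.eq_bot, finrank_bot, add_zero] at this
    exact this
  have hsum2 : finrank ℝ ↥(E 0 ⊔ E ((N:ℝ)-2) ⊔ E (N:ℝ))
      = finrank ℝ (E 0) + finrank ℝ (E ((N:ℝ)-2)) + finrank ℝ (E (N:ℝ)) := by
    have := Submodule.finrank_sup_add_finrank_inf_eq (E 0 ⊔ E ((N:ℝ)-2)) (E (N:ℝ))
    rw [(hdisj2.symm).eq_bot, finrank_bot, add_zero, hsum01] at this
    exact this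
  have htot : finrank ℝ ((Fin N ⊕ Fin N) → ℝ) = 2 * N := by
    simp [Module.finrank_pi]
    omega
  have hupper : finrank ℝ (E 0) + finrank ℝ (E ((N:ℝ)-2)) + finrank ℝ (E (N:ℝ))
      + finrank ℝ (E (2*((N:ℝ)-1))) ≤ 2 * N := by
    have h := Submodule.finrank_add_finrank_le_of_disjoint hdisj3.symm
    rw [hsum2, htot] at h
    omega
  refine ⟨?_, ?_, ?_, ?_⟩ <;> omega
end
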